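/- Let α, σ be schedulers, t ∈ (0,1), let p_data be a probability density on ℝ^d with compact support, and let r : ℝ^d → ℝ be a bounded measurable reward function. Define the reward-tilted density p^r(z) = p_data(z)exp(r(z))/Z^r with Z^r = ∫ p_data(z)exp(r(z)) dz > 0, the value function V_t(x) = log ∫ exp(r(z)) p_{1|t}(z|x) dz, and the marginal vector fields u_t(x) = (σ̇_t/σ_t)x + (α̇_t − α_tσ̇_t/σ_t)D_t(x) and u_t^r(x) = (σ̇_t/σ_t)x + (α̇_t − α_tσ̇_t/σ_t)D_t^r(x), where D_t^r is the denoiser associated to p^r and σ̇_t, α̇_t are the time derivatives of the schedulers. Then for every x ∈ ℝ^d: u_t^r(x) = u_t(x) + c_t ∇V_t(x), where c_t = (α̇_t/α_t)σ_t² − σ̇_tσ_t. -/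

import Mathlib

set_option maxHeartbeats 1000000


open MeasureTheory Real Matrix
open scoped BigOperators

noncomputable def gauss1 (y m v : ℝ) : ℝ :=
  (2 * Real.pi * v) ^ (-(1:ℝ)/2) * Real.exp (-(y - m)^2 / (2 * v))

noncomputable def gauss2 (x m : Fin 2 → ℝ) (S : Matrix (Fin 2) (Fin 2) ℝ) : ℝ :=
  (2 * Real.pi)⁻¹ * S.det ^ (-(1:ℝ)/2) *
    Real.exp (-(1/2) * ((x - m) ⬝ᵥ (S⁻¹ *ᵥ (x - m))))

noncomputable def suffStat (μ : Fin 2 → ℝ) (S : Matrix (Fin 2) (Fin 2) ℝ)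
    (x : Fin 2 → ℝ) : ℝ :=
  (μ ⬝ᵥ (S⁻¹ *ᵥ x)) / (μ ⬝ᵥ (S⁻¹ *ᵥ μ))

structure IsScheduler (α σ : ℝ → ℝ) : Prop where
  contDiff_a : ContDiffOn ℝ 1 α (Set.Icc 0 1)
  contDiff_s : ContDiffOn ℝ 1 σ (Set.Icc 0 1)
  a0 : α 0 = 0
  a1 : α 1 = 1
  s0 : σ 0 = 1
  s1 : σ 1 = 0
  mono_a : StrictMonoOn α (Set.Icc 0 1)
  anti_s : StrictAntiOn σ (Set.Icc 0 1)

def IsProbDensity {d : ℕ} (p : (Fin d → ℝ) → ℝ) : Prop :=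
  Measurable p ∧ (∀ z, 0 ≤ p z) ∧ (∫ z, p z) = 1

noncomputable def marginal {d : ℕ} (α σ : ℝ → ℝ) (p : (Fin d → ℝ) → ℝ)
    (t : ℝ) (x : Fin d → ℝ) : ℝ :=
  ∫ z, (∏ j, gauss1 (x j) (α t * z j) ((σ t)^2)) * p z

noncomputable def post {d : ℕ} (α σ : ℝ → ℝ) (p : (Fin d → ℝ) → ℝ)
    (t : ℝ) (z x : Fin d → ℝ) : ℝ :=
  (∏ j, gauss1 (x j) (α t * z j) ((σ t)^2)) * p z / marginal α σ p t x

noncomputable def denoiser {d : ℕ} (α σ : ℝ → ℝ) (p : (Fin d → ℝ) → ℝ)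
    (t : ℝ) (x : Fin d → ℝ) : Fin d → ℝ :=
  ∫ z, post α σ p t z x • z

noncomputable def glassLik {d : ℕ} (μ : Fin 2 → ℝ) (S : Matrix (Fin 2) (Fin 2) ℝ)
    (x1 x2 z : Fin d → ℝ) : ℝ :=
  ∏ j, gauss2 ![x1 j, x2 j] (z j • μ) S

noncomputable def glassZ {d : ℕ} (μ : Fin 2 → ℝ) (S : Matrix (Fin 2) (Fin 2) ℝ)
    (p : (Fin d → ℝ) → ℝ) (x1 x2 : Fin d → ℝ) : ℝ :=
  ∫ w, glassLik μ S x1 x2 w * p w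

noncomputable def glassPost {d : ℕ} (μ : Fin 2 → ℝ) (S : Matrix (Fin 2) (Fin 2) ℝ)
    (p : (Fin d → ℝ) → ℝ) (x1 x2 z : Fin d → ℝ) : ℝ :=
  glassLik μ S x1 x2 z * p z / glassZ μ S p x1 x2

noncomputable def glassDenoiser {d : ℕ} (μ : Fin 2 → ℝ) (S : Matrix (Fin 2) (Fin 2) ℝ)
    (p : (Fin d → ℝ) → ℝ) (x1 x2 : Fin d → ℝ) : Fin d → ℝ :=
  ∫ z, glassPost μ S p x1 x2 z • z

lemma my_aux_int {d : ℕ} {K : Set (Fin d → ℝ)} {q : (Fin d → ℝ) → ℝ}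
    {E : Type*} [NormedAddCommGroup E] [NormedSpace ℝ E] {φ : (Fin d → ℝ) → E} {B : ℝ}
    (hq : Integrable q) (hsupp : ∀ z ∉ K, q z = 0)
    (hm : AEStronglyMeasurable (fun z => q z • φ z) volume)
    (hB : ∀ z ∈ K, ‖φ z‖ ≤ B) :
    Integrable (fun z => q z • φ z) := by
  refine ((hq.norm.const_mul B)).mono' hm (Filter.Eventually.of_forall fun z => ?_)
  by_cases hz : z ∈ K
  · rw [norm_smul]
    calc ‖q z‖ * ‖φ z‖ ≤ ‖q z‖ * B := mul_le_mul_of_nonneg_left (hB z hz) (norm_nonneg _)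
      _ = B * ‖q z‖ := mul_comm _ _
  · simp [hsupp z hz]

theorem stmt17 {d : ℕ} (α σ : ℝ → ℝ) (hsch : IsScheduler α σ)
    (t : ℝ) (ht : t ∈ Set.Ioo (0:ℝ) 1)
    (p : (Fin d → ℝ) → ℝ) (hp : IsProbDensity p) (hps : HasCompactSupport p)
    (r : (Fin d → ℝ) → ℝ) (hrm : Measurable r) (hrb : ∃ C, ∀ z, |r z| ≤ C)
    (Zr : ℝ) (hZr : Zr = ∫ z, p z * Real.exp (r z))
    (pr : (Fin d → ℝ) → ℝ) (hpr : pr = fun z => p z * Real.exp (r z) / Zr)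
    (V : (Fin d → ℝ) → ℝ)
    (hV : V = fun x => Real.log (∫ z, Real.exp (r z) * post α σ p t z x))
    (u ur : (Fin d → ℝ) → (Fin d → ℝ))
    (hu : u = fun x => (deriv σ t / σ t) • x
      + (deriv α t - α t * deriv σ t / σ t) • denoiser α σ p t x)
    (hur : ur = fun x => (deriv σ t / σ t) • x
      + (deriv α t - α t * deriv σ t / σ t) • denoiser α σ pr t x)
    (c : ℝ) (hc : c = (deriv α t / α t) * (σ t)^2 - deriv σ t * σ t) :
    ∀ x : Fin d → ℝ,
      ur x = u x + c • (fun j => fderiv ℝ V x (Pi.single j 1)) := by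
  obtain ⟨ht0, ht1⟩ := ht
  obtain ⟨hpm, hpnn, hp1⟩ := hp
  obtain ⟨Cr, hCr⟩ := hrb
  intro x₀
  have ha : 0 < α t := by
    have h := hsch.mono_a (Set.mem_Icc.mpr ⟨le_refl (0:ℝ), by linarith⟩)
      (Set.mem_Icc.mpr ⟨ht0.le, ht1.le⟩) ht0
    rwa [hsch.a0] at h
  have hs : 0 < σ t := by
    have h := hsch.anti_s (Set.mem_Icc.mpr ⟨ht0.le, ht1.le⟩)
      (Set.mem_Icc.mpr ⟨by norm_num, le_refl (1:ℝ)⟩) ht1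
    rwa [hsch.s1] at h
  set a : ℝ := α t with ha_def
  set v : ℝ := (σ t)^2 with hv_def
  have hv : 0 < v := pow_pos hs 2
  clear_value a v
  set Cg : ℝ := ((2 * Real.pi * v) ^ (-(1:ℝ)/2)) ^ d with hCg_def
  have hCgpos : 0 < Cg := pow_pos (Real.rpow_pos_of_pos (by positivity) _) d
  clear_value Cg
  set G : (Fin d → ℝ) → (Fin d → ℝ) → ℝ :=
    fun x z => Cg * Real.exp (-(∑ j, (x j - a * z j)^2) / (2*v)) with hG_def
  have hGeq : ∀ x z : Fin d → ℝ, (∏ j, gauss1 (x j) (a * z j) v) = G x z := by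
    intro x z
    rw [hG_def]
    simp only [gauss1]
    rw [Finset.prod_mul_distrib, Finset.prod_const, Finset.card_univ, Fintype.card_fin,
      ← Real.exp_sum, hCg_def]
    congr 1
    congr 1
    rw [← Finset.sum_neg_distrib, Finset.sum_div]
  have hGpos : ∀ x z, 0 < G x z := fun x z => mul_pos hCgpos (Real.exp_pos _)
  have hGle : ∀ x z, G x z ≤ Cg := by
    intro x z
    have h1 : Real.exp (-(∑ j, (x j - a * z j)^2) / (2*v)) ≤ 1 := by
      rw [Real.exp_le_one_iff]
      apply div_nonpos_of_nonpos_of_nonneg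
      · simp only [neg_nonpos]
        exact Finset.sum_nonneg fun j _ => sq_nonneg _
      · positivity
    calc G x z = Cg * Real.exp (-(∑ j, (x j - a * z j)^2) / (2*v)) := rfl
      _ ≤ Cg * 1 := mul_le_mul_of_nonneg_left h1 hCgpos.le
      _ = Cg := mul_one Cg
  have hGcont : ∀ x, Continuous (fun z => G x z) := by
    intro x
    rw [hG_def]
    fun_prop
  clear_value G
  set q1 : (Fin d → ℝ) → ℝ := fun z => p z * Real.exp (r z) with hq1_def
  have hq1m : Measurable q1 := hpm.mul (Real.measurable_exp.comp hrm)
  have hq1nn : ∀ z, 0 ≤ q1 z := fun z => mul_nonneg (hpnn z) (Real.exp_pos _).le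
  have hpint : Integrable p := by
    by_contra h
    rw [integral_undef h] at hp1
    exact one_ne_zero hp1.symm
  have hq1int : Integrable q1 := by
    refine (hpint.const_mul (Real.exp Cr)).mono' hq1m.aestronglyMeasurable
      (Filter.Eventually.of_forall fun z => ?_)
    rw [Real.norm_eq_abs, abs_of_nonneg (hq1nn z)]
    calc p z * Real.exp (r z) ≤ p z * Real.exp Cr :=
          mul_le_mul_of_nonneg_left (Real.exp_le_exp.mpr ((abs_le.mp (hCr z)).2)) (hpnn z)
      _ = Real.exp Cr * p z := mul_comm _ _
  clear_value q1
  set K : Set (Fin d → ℝ) := tsupport p with hK_def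
  have hK : IsCompact K := hK_def ▸ hps
  have hq0supp : ∀ z ∉ K, p z = 0 := fun z hz =>
    image_eq_zero_of_notMem_tsupport (by rwa [← hK_def])
  have hq1supp : ∀ z ∉ K, q1 z = 0 := fun z hz => by
    rw [hq1_def]
    simp [hq0supp z hz]
  obtain ⟨R₀, hR₀⟩ := isBounded_iff_forall_norm_le.mp hK.isBounded
  set R := max R₀ 0 with hR_def
  have hR : ∀ z ∈ K, ‖z‖ ≤ R := fun z hz => le_trans (hR₀ z hz) (le_max_left _ _)
  have hRnn : (0:ℝ) ≤ R := le_max_right _ _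
  clear_value K R
  have hpne : ¬ (p =ᵐ[volume] (0 : (Fin d → ℝ) → ℝ)) := by
    intro h
    have h2 : (∫ z, p z) = 0 := by
      rw [integral_congr_ae h]
      simp
    rw [hp1] at h2
    exact one_ne_zero h2
  have key : ∀ (q : (Fin d → ℝ) → ℝ), Measurable q → (∀ z, 0 ≤ q z) → Integrable q →
      (∀ z, q z = 0 → p z = 0) → ∀ x, 0 < ∫ z, G x z * q z := by
    intro q hqm hqnn hqint hqp x
    have hmeas : AEStronglyMeasurable (fun z => G x z * q z) volume :=
      ((hGcont x).aestronglyMeasurable.mul hqm.aestronglyMeasurable)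
    have hint : Integrable (fun z => G x z * q z) := by
      refine (hqint.const_mul Cg).mono' hmeas (Filter.Eventually.of_forall fun z => ?_)
      rw [Real.norm_eq_abs, abs_of_nonneg (mul_nonneg (hGpos x z).le (hqnn z))]
      exact mul_le_mul_of_nonneg_right (hGle x z) (hqnn z)
    have hnn : 0 ≤ ∫ z, G x z * q z :=
      integral_nonneg fun z => mul_nonneg (hGpos x z).le (hqnn z)
    rcases hnn.lt_or_eq with h | h
    · exact h
    · exfalso
      apply hpne
      have h0 : (fun z => G x z * q z) =ᵐ[volume] 0 :=
        (integral_eq_zero_iff_of_nonneg (fun z => mul_nonneg (hGpos x z).le (hqnn z)) hint).mp h.symm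
      filter_upwards [h0] with z hz
      simp only [Pi.zero_apply] at hz ⊢
      have hqz : q z = 0 := (mul_eq_zero.mp hz).resolve_left (hGpos x z).ne'
      exact hqp z hqz
  have hMpos : ∀ x, 0 < ∫ z, G x z * p z := key p hpm hpnn hpint (fun z h => h)
  have hNpos : ∀ x, 0 < ∫ z, G x z * q1 z := by
    refine key q1 hq1m hq1nn hq1int (fun z h => ?_)
    rw [hq1_def] at h
    exact (mul_eq_zero.mp h).resolve_right (Real.exp_ne_zero _)
  have hZrpos : 0 < Zr := by
    have hZr' : Zr = ∫ z, q1 z := hZr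
    rw [hZr']
    have hnn : 0 ≤ ∫ z, q1 z := integral_nonneg fun z => hq1nn z
    rcases hnn.lt_or_eq with h | h
    · exact h
    · exfalso
      apply hpne
      have h0 : q1 =ᵐ[volume] 0 :=
        (integral_eq_zero_iff_of_nonneg (fun z => hq1nn z) hq1int).mp h.symm
      filter_upwards [h0] with z hz
      simp only [Pi.zero_apply] at hz ⊢
      rw [hq1_def] at hz
      exact (mul_eq_zero.mp hz).resolve_right (Real.exp_ne_zero _)
  -- the linear functional
  set L : (Fin d → ℝ) → (Fin d → ℝ) → ((Fin d → ℝ) →L[ℝ] ℝ) :=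
    fun x z => ∑ j, (-((x j - a * z j) / v)) •
      (ContinuousLinearMap.proj (R := ℝ) (φ := fun _ : Fin d => ℝ) j) with hL_def
  have hLapp : ∀ x z h, L x z h = ∑ j, (-((x j - a * z j) / v)) * h j := by
    intro x z h
    rw [hL_def]
    simp [ContinuousLinearMap.sum_apply, ContinuousLinearMap.smul_apply,
      ContinuousLinearMap.proj_apply, smul_eq_mul]
  have hLsingle : ∀ x z (i : Fin d), L x z (Pi.single i 1) = -((x i - a * z i) / v) := by
    intro x z i
    rw [hLapp]
    rw [Finset.sum_eq_single i]
    · simp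
    · intro k _ hk
      simp [Pi.single_eq_of_ne hk]
    · intro hj
      exact absurd (Finset.mem_univ i) hj
  have hLnorm : ∀ x z, ‖L x z‖ ≤ (∑ j, |x j - a * z j|) / v := by
    intro x z
    apply ContinuousLinearMap.opNorm_le_bound _ (by positivity)
    intro h
    rw [hLapp, Real.norm_eq_abs]
    calc |∑ j, (-((x j - a * z j) / v)) * h j| ≤ ∑ j, |(-((x j - a * z j) / v)) * h j| :=
          Finset.abs_sum_le_sum_abs _ _
      _ ≤ ∑ j, (|x j - a * z j| / v) * ‖h‖ := by
          apply Finset.sum_le_sum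
          intro i _
          rw [abs_mul, abs_neg, abs_div, abs_of_pos hv]
          refine mul_le_mul_of_nonneg_left ?_ (by positivity)
          rw [← Real.norm_eq_abs]
          exact norm_le_pi_norm h i
      _ = (∑ j, |x j - a * z j|) / v * ‖h‖ := by
          rw [← Finset.sum_mul, Finset.sum_div]
  have hLcont : ∀ x, Continuous (fun z => L x z) := by
    intro x
    rw [hL_def]
    apply continuous_finset_sum
    intro i _
    exact (Continuous.smul (by fun_prop : Continuous fun z : Fin d → ℝ => -((x i - a * z i) / v)) continuous_const)
  clear_value L
  -- differentiability of G in x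
  have hGderiv : ∀ (z x : Fin d → ℝ), HasFDerivAt (fun y => G y z) ((G x z) • L x z) x := by
    intro z x
    have hS : HasFDerivAt (fun y : Fin d → ℝ => ∑ j, (y j - a * z j)^2)
        (∑ j, (2 * (x j - a * z j)) •
          (ContinuousLinearMap.proj (R := ℝ) (φ := fun _ : Fin d => ℝ) j)) x := by
      apply HasFDerivAt.fun_sum
      intro i _
      have h1 : HasFDerivAt (fun y : Fin d → ℝ => y i - a * z i)
          (ContinuousLinearMap.proj (R := ℝ) (φ := fun _ : Fin d => ℝ) i) x :=
        ((ContinuousLinearMap.proj (R := ℝ) (φ := fun _ : Fin d => ℝ) i).hasFDerivAt).sub_const _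
      have h2 := h1.mul h1
      simp only [pow_two]
      refine h2.congr_fderiv ?_
      symm
      module
    have h3 := (hS.const_mul (-(2*v)⁻¹)).exp.const_mul Cg
    have heq : (fun y : Fin d → ℝ => Cg * Real.exp (-(2*v)⁻¹ * ∑ j, (y j - a * z j)^2))
        = fun y => G y z := by
      funext y
      simp only [hG_def]
      generalize (∑ j, (y j - a * z j)^2) = S
      have harg : -(2*v)⁻¹ * S = -S / (2*v) := by
        rw [div_eq_inv_mul]
        ring
      rw [harg]
    rw [heq] at h3
    refine h3.congr_fderiv ?_
    symm
    apply ContinuousLinearMap.ext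
    intro w
    simp only [ContinuousLinearMap.smul_apply, ContinuousLinearMap.sum_apply,
      ContinuousLinearMap.proj_apply, smul_eq_mul, hLapp]
    have hsum : ∑ j, -((x j - a * z j) / v) * w j
        = (-(2*v)⁻¹) * ∑ j, (2 * (x j - a * z j)) * w j := by
      rw [Finset.mul_sum]
      apply Finset.sum_congr rfl
      intro i _
      field_simp
    rw [hsum, hG_def]
    have harg : -(2*v)⁻¹ * ∑ j, (x j - a * z j)^2 = -(∑ j, (x j - a * z j)^2) / (2*v) := by
      rw [div_eq_inv_mul]
      ring
    rw [harg]
    ring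
  -- the key parametric differentiation
  have hderiv : ∀ (q : (Fin d → ℝ) → ℝ), Measurable q → (∀ z, 0 ≤ q z) → Integrable q →
      (∀ z ∉ K, q z = 0) →
      HasFDerivAt (fun y => ∫ z, G y z * q z) (∫ z, (G x₀ z * q z) • L x₀ z) x₀ := by
    intro q hqm hqnn hqint hqsupp
    set B : ℝ := Cg * (((d:ℝ) * ((‖x₀‖ + 1) + |a| * R)) / v) with hB_def
    have hBnn : 0 ≤ B := by positivity
    apply hasFDerivAt_integral_of_dominated_of_fderiv_le (s := Metric.ball x₀ 1)
      (bound := fun z => B * |q z|)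
      (F' := fun y z => (G y z * q z) • L y z) (Metric.ball_mem_nhds x₀ one_pos)
    · exact Filter.Eventually.of_forall fun y =>
        ((hGcont y).aestronglyMeasurable.mul hqm.aestronglyMeasurable)
    · refine (hqint.const_mul Cg).mono'
        ((hGcont x₀).aestronglyMeasurable.mul hqm.aestronglyMeasurable)
        (Filter.Eventually.of_forall fun z => ?_)
      rw [Real.norm_eq_abs, abs_of_nonneg (mul_nonneg (hGpos x₀ z).le (hqnn z))]
      exact mul_le_mul_of_nonneg_right (hGle x₀ z) (hqnn z)
    · exact ((hGcont x₀).aestronglyMeasurable.mul hqm.aestronglyMeasurable).smul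
        (hLcont x₀).aestronglyMeasurable
    · apply Filter.Eventually.of_forall
      intro z x hx
      by_cases hz : z ∈ K
      · have hxnorm : ‖x‖ ≤ ‖x₀‖ + 1 := by
          have hd : ‖x - x₀‖ < 1 := by
            rwa [Metric.mem_ball, dist_eq_norm] at hx
          have h0 : x₀ + (x - x₀) = x := by abel
          have h1 := norm_add_le x₀ (x - x₀)
          rw [h0] at h1
          linarith
        have hterm : ∀ i : Fin d, |x i - a * z i| ≤ (‖x₀‖ + 1) + |a| * R := by
          intro i
          have h1 : |x i| ≤ ‖x₀‖ + 1 := le_trans (norm_le_pi_norm x i) hxnorm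
          have h2 : |z i| ≤ R := le_trans (norm_le_pi_norm z i) (hR z hz)
          have h3 : |a * z i| ≤ |a| * R := by
            rw [abs_mul]
            exact mul_le_mul_of_nonneg_left h2 (abs_nonneg a)
          calc |x i - a * z i| ≤ |x i| + |a * z i| := abs_sub _ _
            _ ≤ (‖x₀‖ + 1) + |a| * R := add_le_add h1 h3
        have hLb : ‖L x z‖ ≤ ((d:ℝ) * ((‖x₀‖ + 1) + |a| * R)) / v := by
          refine le_trans (hLnorm x z) ?_
          rw [div_le_div_iff₀ hv hv]
          have hsum : ∑ j, |x j - a * z j| ≤ (d:ℝ) * ((‖x₀‖ + 1) + |a| * R) := by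
            calc ∑ j, |x j - a * z j| ≤ ∑ _j : Fin d, ((‖x₀‖ + 1) + |a| * R) :=
                  Finset.sum_le_sum fun i _ => hterm i
              _ = (d:ℝ) * ((‖x₀‖ + 1) + |a| * R) := by
                  rw [Finset.sum_const, Finset.card_univ, Fintype.card_fin, nsmul_eq_mul]
          nlinarith [hv.le]
        calc ‖(G x z * q z) • L x z‖ = |G x z * q z| * ‖L x z‖ := norm_smul (G x z * q z) (L x z)
          _ ≤ (Cg * |q z|) * (((d:ℝ) * ((‖x₀‖ + 1) + |a| * R)) / v) := by
              apply mul_le_mul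
              · rw [abs_mul, abs_of_pos (hGpos x z)]
                exact mul_le_mul_of_nonneg_right (hGle x z) (abs_nonneg _)
              · exact hLb
              · exact norm_nonneg _
              · positivity
          _ = B * |q z| := by
              rw [hB_def]
              ring
      · simp [hqsupp z hz, hBnn]
    · exact (hqint.abs.const_mul _)
    · apply Filter.Eventually.of_forall
      intro z x hx
      have h := (hGderiv z x).mul_const (q z)
      refine h.congr_fderiv ?_
      symm
      rw [smul_smul, mul_comm]
  -- integrability facts at x₀
  have hF'int : ∀ (q : (Fin d → ℝ) → ℝ), Measurable q → Integrable q →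
      (∀ z ∉ K, q z = 0) →
      Integrable (fun z => (G x₀ z * q z) • L x₀ z) := by
    intro q hqm hqint hqsupp
    have h := my_aux_int (K := K) (q := q) (φ := fun z => G x₀ z • L x₀ z)
      (B := Cg * (((d:ℝ) * ((‖x₀‖ + |a| * R)) ) / v) + Cg) hqint hqsupp
      (by
        apply AEStronglyMeasurable.smul hqm.aestronglyMeasurable
        exact ((hGcont x₀).smul (hLcont x₀)).aestronglyMeasurable)
      (by
        intro z hz
        show ‖G x₀ z • L x₀ z‖ ≤ _
        rw [show ‖G x₀ z • L x₀ z‖ = |G x₀ z| * ‖L x₀ z‖ from norm_smul (G x₀ z) (L x₀ z),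
          abs_of_pos (hGpos x₀ z)]
        have hLb : ‖L x₀ z‖ ≤ ((d:ℝ) * (‖x₀‖ + |a| * R)) / v := by
          refine le_trans (hLnorm x₀ z) ?_
          rw [div_le_div_iff₀ hv hv]
          have hterm : ∀ i : Fin d, |x₀ i - a * z i| ≤ ‖x₀‖ + |a| * R := by
            intro i
            have h1 : |x₀ i| ≤ ‖x₀‖ := norm_le_pi_norm x₀ i
            have h2 : |z i| ≤ R := le_trans (norm_le_pi_norm z i) (hR z hz)
            have h3 : |a * z i| ≤ |a| * R := by
              rw [abs_mul]
              exact mul_le_mul_of_nonneg_left h2 (abs_nonneg a)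
            calc |x₀ i - a * z i| ≤ |x₀ i| + |a * z i| := abs_sub _ _
              _ ≤ ‖x₀‖ + |a| * R := add_le_add h1 h3
          have hsum : ∑ j, |x₀ j - a * z j| ≤ (d:ℝ) * (‖x₀‖ + |a| * R) := by
            calc ∑ j, |x₀ j - a * z j| ≤ ∑ _j : Fin d, (‖x₀‖ + |a| * R) :=
                  Finset.sum_le_sum fun i _ => hterm i
              _ = (d:ℝ) * (‖x₀‖ + |a| * R) := by
                  rw [Finset.sum_const, Finset.card_univ, Fintype.card_fin, nsmul_eq_mul]
          nlinarith [hv.le]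
        calc G x₀ z * ‖L x₀ z‖ ≤ Cg * (((d:ℝ) * (‖x₀‖ + |a| * R)) / v) := by
              apply mul_le_mul (hGle x₀ z) hLb (norm_nonneg _) hCgpos.le
          _ ≤ Cg * (((d:ℝ) * (‖x₀‖ + |a| * R)) / v) + Cg := by
              linarith [hCgpos.le])
    refine h.congr (Filter.Eventually.of_forall fun z => ?_)
    simp only [smul_smul]
    rw [mul_comm]
  have hIq : ∀ (q : (Fin d → ℝ) → ℝ), Measurable q → (∀ z, 0 ≤ q z) → Integrable q →
      Integrable (fun z => G x₀ z * q z) := by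
    intro q hqm hqnn hqint
    refine (hqint.const_mul Cg).mono'
      ((hGcont x₀).aestronglyMeasurable.mul hqm.aestronglyMeasurable)
      (Filter.Eventually.of_forall fun z => ?_)
    rw [Real.norm_eq_abs, abs_of_nonneg (mul_nonneg (hGpos x₀ z).le (hqnn z))]
    exact mul_le_mul_of_nonneg_right (hGle x₀ z) (hqnn z)
  have hIzq : ∀ (q : (Fin d → ℝ) → ℝ), Measurable q → Integrable q →
      (∀ z ∉ K, q z = 0) → ∀ (i : Fin d),
      Integrable (fun z => G x₀ z * q z * z i) := by
    intro q hqm hqint hqsupp i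
    have h := my_aux_int (K := K) (q := q) (φ := fun z => G x₀ z * z i)
      (B := Cg * R) hqint hqsupp
      (by
        apply AEStronglyMeasurable.smul hqm.aestronglyMeasurable
        exact ((hGcont x₀).mul (continuous_apply i)).aestronglyMeasurable)
      (by
        intro z hz
        rw [Real.norm_eq_abs, abs_mul, abs_of_pos (hGpos x₀ z)]
        apply mul_le_mul (hGle x₀ z) ?_ (abs_nonneg _) hCgpos.le
        exact le_trans (norm_le_pi_norm z i) (hR z hz))
    refine h.congr (Filter.Eventually.of_forall fun z => ?_)
    simp only [smul_eq_mul]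
    ring
  -- evaluation of the derivative at Pi.single i 1
  have heval : ∀ (q : (Fin d → ℝ) → ℝ), Measurable q → (∀ z, 0 ≤ q z) → Integrable q →
      (∀ z ∉ K, q z = 0) → ∀ (i : Fin d),
      (∫ z, (G x₀ z * q z) • L x₀ z) (Pi.single i 1)
        = (-(x₀ i)/v) * (∫ z, G x₀ z * q z) + (a/v) * (∫ z, G x₀ z * q z * z i) := by
    intro q hqm hqnn hqint hqsupp i
    rw [ContinuousLinearMap.integral_apply (hF'int q hqm hqint hqsupp)]
    have hptw : ∀ z, ((G x₀ z * q z) • L x₀ z) (Pi.single i 1)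
        = (-(x₀ i)/v) * (G x₀ z * q z) + (a/v) * (G x₀ z * q z * z i) := by
      intro z
      rw [ContinuousLinearMap.smul_apply, hLsingle, smul_eq_mul]
      field_simp
      ring
    simp only [hptw]
    rw [integral_add (((hIq q hqm hqnn hqint)).const_mul _)
      (((hIzq q hqm hqint hqsupp i)).const_mul _), integral_const_mul, integral_const_mul]
  -- denoiser components
  have hpost0 : ∀ z, post α σ p t z x₀ = G x₀ z * p z / (∫ z, G x₀ z * p z) := by
    intro z
    simp only [post, marginal, ← ha_def, ← hv_def, hGeq]
  have hD0 : ∀ (i : Fin d), denoiser α σ p t x₀ i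
      = (∫ z, G x₀ z * p z * z i) / (∫ z, G x₀ z * p z) := by
    intro i
    have hint : Integrable (fun z => post α σ p t z x₀ • z) := by
      have h := my_aux_int (K := K) (q := p)
        (φ := fun z => (G x₀ z / (∫ z, G x₀ z * p z)) • z)
        (B := (Cg / (∫ z, G x₀ z * p z)) * R) hpint hq0supp
        (by
          apply AEStronglyMeasurable.smul hpm.aestronglyMeasurable
          exact (((hGcont x₀).div_const _).smul continuous_id).aestronglyMeasurable)
        (by
          intro z hz
          show ‖(G x₀ z / (∫ z, G x₀ z * p z)) • z‖ ≤ _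
          rw [show ‖(G x₀ z / (∫ z, G x₀ z * p z)) • z‖
              = |G x₀ z / (∫ z, G x₀ z * p z)| * ‖z‖ from norm_smul _ _,
            abs_div, abs_of_pos (hGpos x₀ z), abs_of_pos (hMpos x₀)]
          apply mul_le_mul ?_ (hR z hz) (norm_nonneg _)
            (div_nonneg hCgpos.le (hMpos x₀).le)
          exact (div_le_div_iff_of_pos_right (hMpos x₀)).mpr (hGle x₀ z))
      refine h.congr (Filter.Eventually.of_forall fun z => ?_)
      simp only [smul_smul]
      rw [hpost0 z]
      congr 1
      ring
    rw [denoiser]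
    have hproj : (∫ z, post α σ p t z x₀ • z) i
        = (ContinuousLinearMap.proj (R := ℝ) (φ := fun _ : Fin d => ℝ) i)
          (∫ z, post α σ p t z x₀ • z) := rfl
    rw [hproj, ← ContinuousLinearMap.integral_comp_comm _ hint]
    calc (∫ z, (ContinuousLinearMap.proj (R := ℝ) (φ := fun _ : Fin d => ℝ) i)
            (post α σ p t z x₀ • z))
        = ∫ z, (G x₀ z * p z * z i) / (∫ z, G x₀ z * p z) := by
          congr 1
          funext z
          rw [ContinuousLinearMap.proj_apply, Pi.smul_apply, smul_eq_mul, hpost0 z]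
          ring
      _ = (∫ z, G x₀ z * p z * z i) / (∫ z, G x₀ z * p z) := integral_div _ _
  have hpostr : ∀ z, post α σ pr t z x₀ = G x₀ z * q1 z / (∫ z, G x₀ z * q1 z) := by
    intro z
    have hmarg : marginal α σ pr t x₀ = (∫ z, G x₀ z * q1 z) / Zr := by
      rw [marginal]
      simp only [hpr, ← ha_def, ← hv_def, hGeq]
      rw [← integral_div]
      congr 1
      funext w
      rw [hq1_def]
      ring
    rw [post, hmarg]
    simp only [hpr, ← ha_def, ← hv_def, hGeq]
    rw [hq1_def]
    field_simp
  have hDr : ∀ (i : Fin d), denoiser α σ pr t x₀ i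
      = (∫ z, G x₀ z * q1 z * z i) / (∫ z, G x₀ z * q1 z) := by
    intro i
    have hint : Integrable (fun z => post α σ pr t z x₀ • z) := by
      have h := my_aux_int (K := K) (q := q1)
        (φ := fun z => (G x₀ z / (∫ z, G x₀ z * q1 z)) • z)
        (B := (Cg / (∫ z, G x₀ z * q1 z)) * R) hq1int hq1supp
        (by
          apply AEStronglyMeasurable.smul hq1m.aestronglyMeasurable
          exact (((hGcont x₀).div_const _).smul continuous_id).aestronglyMeasurable)
        (by
          intro z hz
          show ‖(G x₀ z / (∫ z, G x₀ z * q1 z)) • z‖ ≤ _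
          rw [show ‖(G x₀ z / (∫ z, G x₀ z * q1 z)) • z‖
              = |G x₀ z / (∫ z, G x₀ z * q1 z)| * ‖z‖ from norm_smul _ _,
            abs_div, abs_of_pos (hGpos x₀ z), abs_of_pos (hNpos x₀)]
          apply mul_le_mul ?_ (hR z hz) (norm_nonneg _)
            (div_nonneg hCgpos.le (hNpos x₀).le)
          exact (div_le_div_iff_of_pos_right (hNpos x₀)).mpr (hGle x₀ z))
      refine h.congr (Filter.Eventually.of_forall fun z => ?_)
      simp only [smul_smul]
      rw [hpostr z]
      congr 1
      ring
    rw [denoiser]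
    have hproj : (∫ z, post α σ pr t z x₀ • z) i
        = (ContinuousLinearMap.proj (R := ℝ) (φ := fun _ : Fin d => ℝ) i)
          (∫ z, post α σ pr t z x₀ • z) := rfl
    rw [hproj, ← ContinuousLinearMap.integral_comp_comm _ hint]
    calc (∫ z, (ContinuousLinearMap.proj (R := ℝ) (φ := fun _ : Fin d => ℝ) i)
            (post α σ pr t z x₀ • z))
        = ∫ z, (G x₀ z * q1 z * z i) / (∫ z, G x₀ z * q1 z) := by
          congr 1
          funext z
          rw [ContinuousLinearMap.proj_apply, Pi.smul_apply, smul_eq_mul, hpostr z]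
          ring
      _ = (∫ z, G x₀ z * q1 z * z i) / (∫ z, G x₀ z * q1 z) := integral_div _ _
  -- V and its derivative
  have hVdiff : HasFDerivAt V
      ((∫ z, G x₀ z * q1 z)⁻¹ • (∫ z, (G x₀ z * q1 z) • L x₀ z)
        - (∫ z, G x₀ z * p z)⁻¹ • (∫ z, (G x₀ z * p z) • L x₀ z)) x₀ := by
    have hVeq : V = fun y => Real.log (∫ z, G y z * q1 z) - Real.log (∫ z, G y z * p z) := by
      funext y
      simp only [hV]
      have hpost : ∀ z, Real.exp (r z) * post α σ p t z y
          = (G y z * q1 z) / (∫ z, G y z * p z) := by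
        intro z
        rw [post, marginal]
        simp only [← ha_def, ← hv_def, hGeq]
        rw [hq1_def]
        ring
      have h1 : (∫ z, Real.exp (r z) * post α σ p t z y)
          = (∫ z, G y z * q1 z) / (∫ z, G y z * p z) := by
        simp only [hpost]
        rw [integral_div]
      rw [h1, Real.log_div (hNpos y).ne' (hMpos y).ne']
    rw [hVeq]
    exact ((hderiv q1 hq1m hq1nn hq1int hq1supp).log (hNpos x₀).ne').sub
      ((hderiv p hpm hpnn hpint hq0supp).log (hMpos x₀).ne')
  have hfd := hVdiff.fderiv
  -- final computation
  funext j
  have hval : fderiv ℝ V x₀ (Pi.single j 1)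
      = (∫ z, G x₀ z * q1 z)⁻¹ * ((-(x₀ j)/v) * (∫ z, G x₀ z * q1 z)
          + (a/v) * (∫ z, G x₀ z * q1 z * z j))
        - (∫ z, G x₀ z * p z)⁻¹ * ((-(x₀ j)/v) * (∫ z, G x₀ z * p z)
          + (a/v) * (∫ z, G x₀ z * p z * z j)) := by
    rw [hfd, ContinuousLinearMap.sub_apply, ContinuousLinearMap.smul_apply,
      ContinuousLinearMap.smul_apply, smul_eq_mul, smul_eq_mul,
      heval q1 hq1m hq1nn hq1int hq1supp j, heval p hpm hpnn hpint hq0supp j]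
  simp only [hu, hur, Pi.add_apply, Pi.smul_apply, smul_eq_mul]
  rw [hval, hD0 j, hDr j, hc, hv_def]
  have hN := hNpos x₀
  have hM := hMpos x₀
  field_simp
  ring
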